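/- arXiv:2306.02290 — 4 statements merged into one kernel-verified Lean document; each statement's English description precedes it below -/
import Mathlib

section
/- Let G be a simple non-commutative group and T a finite index set. A subgroup H of the direct product ∏_{σ∈T} G is normalized by the diagonal subgroup Δ(G) if and only if H is a product of diagonals, i.e., there exist pairwise disjoint nonempty subsets T₁, …, T_r of T such that H consists exactly of those tuples (g_σ)_{σ∈T} which are constant on each T_i and equal to the identity at every index σ ∉ T₁ ∪ … ∪ T_r. -/
section Aux
variable {G : Type*} [Group G] {T : Type*}

def projSub (H : Subgroup (T → G)) (s : Set T) (ρ : T) : Subgroup G where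
  carrier := {x | ∃ v ∈ H, (∀ σ ∈ s, v σ = 1) ∧ v ρ = x}
  one_mem' := ⟨1, H.one_mem, fun _ _ => rfl, rfl⟩
  mul_mem' := by
    rintro x y ⟨v, hv, hvs, rfl⟩ ⟨u, hu, hus, rfl⟩
    exact ⟨v * u, H.mul_mem hv hu,
      fun σ hσ => by simp [Pi.mul_apply, hvs σ hσ, hus σ hσ], rfl⟩
  inv_mem' := by
    rintro x ⟨v, hv, hvs, rfl⟩
    exact ⟨v⁻¹, H.inv_mem hv, fun σ hσ => by simp [Pi.inv_apply, hvs σ hσ], rfl⟩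

lemma mem_projSub {H : Subgroup (T → G)} {s : Set T} {ρ : T} {x : G} :
    x ∈ projSub H s ρ ↔ ∃ v ∈ H, (∀ σ ∈ s, v σ = 1) ∧ v ρ = x := Iff.rfl

lemma projSub_normal (H : Subgroup (T → G))
    (hH : ∀ g : G, ∀ h ∈ H, (fun _ : T => g) * h * (fun _ : T => g)⁻¹ ∈ H)
    (s : Set T) (ρ : T) : (projSub H s ρ).Normal := by
  constructor
  rintro x ⟨v, hv, hvs, rfl⟩ g
  refine ⟨(fun _ : T => g) * v * (fun _ : T => g)⁻¹, hH g v hv,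
    fun σ hσ => ?_, ?_⟩
  · simp [Pi.mul_apply, Pi.inv_apply, hvs σ hσ]
  · simp [Pi.mul_apply, Pi.inv_apply]

lemma normal_all [IsSimpleGroup G] {N : Subgroup G} (hN : N.Normal) {x : G}
    (hx : x ∈ N) (hx1 : x ≠ 1) (y : G) : y ∈ N := by
  rcases hN.eq_bot_or_eq_top with h | h
  · rw [h, Subgroup.mem_bot] at hx; exact absurd hx hx1
  · simp [h]

lemma center_trivial [IsSimpleGroup G] (hnc : ∃ a b : G, a * b ≠ b * a)
    {z : G} (hz : ∀ y, z * y = y * z) : z = 1 := by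
  have hZ : (Subgroup.center G).Normal := inferInstance
  rcases hZ.eq_bot_or_eq_top with h | h
  · have : z ∈ Subgroup.center G := Subgroup.mem_center_iff.mpr (fun g => (hz g).symm)
    rwa [h, Subgroup.mem_bot] at this
  · obtain ⟨a, b, hab⟩ := hnc
    have : a ∈ Subgroup.center G := by rw [h]; trivial
    exact absurd ((Subgroup.mem_center_iff.mp this b).symm) hab

/-- Core lemma: if `ρ` is in the support of `H` and no `τ ∈ F` is equivalent to `ρ`,
then `H` contains an element vanishing on `F` and nontrivial at `ρ`. -/
lemma core_lemma [IsSimpleGroup G] (hnc : ∃ a b : G, a * b ≠ b * a)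
    (H : Subgroup (T → G))
    (hH : ∀ g : G, ∀ h ∈ H, (fun _ : T => g) * h * (fun _ : T => g)⁻¹ ∈ H)
    (F : Finset T) (ρ : T) (hρ : ∃ f ∈ H, f ρ ≠ 1)
    (hne : ∀ τ ∈ F, ∃ f ∈ H, f ρ ≠ f τ) :
    ∃ v ∈ H, (∀ σ ∈ F, v σ = 1) ∧ v ρ ≠ 1 := by
  classical
  induction F using Finset.induction_on with
  | empty =>
      obtain ⟨f, hf, hf1⟩ := hρ
      exact ⟨f, hf, by simp, hf1⟩
  | @insert τ F₀ hτF₀ IH =>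
      obtain ⟨w, hw, hwF₀, hwρ⟩ := IH (fun σ hσ => hne σ (Finset.mem_insert_of_mem hσ))
      -- case split on whether w already vanishes at τ
      by_cases hwτ : w τ = 1
      · exact ⟨w, hw, by
          intro σ hσ
          rcases Finset.mem_insert.mp hσ with rfl | hσ
          · exact hwτ
          · exact hwF₀ σ hσ, hwρ⟩
      -- K₂ := projection at τ of elements vanishing on F₀ : it is ⊤
      have hK₂ : ∀ y : G, y ∈ projSub H (↑F₀) τ :=
        fun y => normal_all (projSub_normal H hH _ _)
          (mem_projSub.mpr ⟨w, hw, fun σ hσ => hwF₀ σ (by exact_mod_cast hσ), rfl⟩) hwτ y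
      -- K₁ := projection at ρ : also ⊤
      have hK₁ : ∀ x : G, x ∈ projSub H (↑F₀) ρ :=
        fun x => normal_all (projSub_normal H hH _ _)
          (mem_projSub.mpr ⟨w, hw, fun σ hσ => hwF₀ σ (by exact_mod_cast hσ), rfl⟩) hwρ x
      -- N₁ := elements vanishing on F₀ and at τ, projected at ρ
      rcases (projSub_normal H hH (↑F₀ ∪ {τ}) ρ).eq_bot_or_eq_top with hbot | htop
      swap
      · -- N₁ = ⊤ : done
        obtain ⟨x, hx⟩ := exists_ne (1 : G)
        have hxmem : x ∈ projSub H (↑F₀ ∪ {τ}) ρ := by rw [htop]; trivial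
        obtain ⟨v, hv, hvs, hvρ⟩ := mem_projSub.mp hxmem
        refine ⟨v, hv, ?_, by rw [hvρ]; exact hx⟩
        intro σ hσ
        rcases Finset.mem_insert.mp hσ with rfl | hσ
        · exact hvs σ (Or.inr rfl)
        · exact hvs σ (Or.inl (by exact_mod_cast hσ))
      -- N₁ = ⊥ : derive a contradiction
      exfalso
      have hbot' : ∀ v ∈ H, (∀ σ ∈ F₀, v σ = 1) → v τ = 1 → v ρ = 1 := by
        intro v hv hvF₀ hvτ
        have hmem : v ρ ∈ projSub H (↑F₀ ∪ {τ}) ρ := mem_projSub.mpr ⟨v, hv, fun σ hσ => by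
          rcases hσ with hσ | hσ
          · exact hvF₀ σ (by exact_mod_cast hσ)
          · rw [Set.mem_singleton_iff] at hσ; subst hσ; exact hvτ, rfl⟩
        rw [hbot, Subgroup.mem_bot] at hmem; exact hmem
      have hbot₂ : ∀ v ∈ H, (∀ σ ∈ F₀, v σ = 1) → v ρ = 1 → v τ = 1 := by
        intro v hv hvF₀ hvρ'
        by_contra hvτ
        have hN₂ : ∀ y : G, y ∈ projSub H (↑F₀ ∪ {ρ}) τ :=
          fun y => normal_all (projSub_normal H hH _ _)
            (mem_projSub.mpr ⟨v, hv, fun σ hσ => by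
              rcases hσ with hσ | hσ
              · exact hvF₀ σ (by exact_mod_cast hσ)
              · rw [Set.mem_singleton_iff] at hσ; subst hσ; exact hvρ', rfl⟩) hvτ y
        obtain ⟨u, hu, hus, huτ⟩ := mem_projSub.mp (hN₂ (w τ)⁻¹)
        have h1 : (w * u) ρ = w ρ := by
          simp [Pi.mul_apply, hus ρ (Or.inr rfl)]
        have h2 : (w * u) τ = 1 := by simp [Pi.mul_apply, huτ]
        have h3 : ∀ σ ∈ F₀, (w * u) σ = 1 := fun σ hσ => by
          simp [Pi.mul_apply, hwF₀ σ hσ, hus σ (Or.inl (by exact_mod_cast hσ))]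
        have := hbot' (w * u) (H.mul_mem hw hu) h3 h2
        rw [h1] at this; exact hwρ this
      -- same ρ-value implies same τ-value for elements vanishing on F₀
      have same : ∀ u ∈ H, ∀ v ∈ H, (∀ σ ∈ F₀, u σ = 1) → (∀ σ ∈ F₀, v σ = 1) →
          u ρ = v ρ → u τ = v τ := by
        intro u hu v hv huF hvF hρeq
        have hmem : (u⁻¹ * v) ∈ H := H.mul_mem (H.inv_mem hu) hv
        have h1 : (u⁻¹ * v) ρ = 1 := by simp [Pi.mul_apply, Pi.inv_apply, hρeq]
        have h2 : ∀ σ ∈ F₀, (u⁻¹ * v) σ = 1 := fun σ hσ => by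
          simp [Pi.mul_apply, Pi.inv_apply, huF σ hσ, hvF σ hσ]
        have h3 := hbot₂ _ hmem h2 h1
        simp only [Pi.mul_apply, Pi.inv_apply] at h3
        exact (inv_mul_eq_one.mp h3)
      -- every element vanishing on F₀ is diagonal at (ρ, τ)
      have diag : ∀ u ∈ H, (∀ σ ∈ F₀, u σ = 1) → u ρ = u τ := by
        intro u hu huF
        have hcomm : ∀ y : G, ((u τ)⁻¹ * u ρ) * y = y * ((u τ)⁻¹ * u ρ) := by
          intro y
          obtain ⟨v, hv, hvF, hvτ⟩ := mem_projSub.mp (hK₂ y)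
          have m1 : ((fun _ : T => u ρ) * v * (fun _ : T => u ρ)⁻¹) ∈ H := hH _ v hv
          have m2 : (u * v * u⁻¹) ∈ H := H.mul_mem (H.mul_mem hu hv) (H.inv_mem hu)
          have e1 : ∀ σ ∈ F₀, ((fun _ : T => u ρ) * v * (fun _ : T => u ρ)⁻¹) σ = 1 :=
            fun σ hσ => by simp [Pi.mul_apply, Pi.inv_apply, hvF σ hσ]
          have e2 : ∀ σ ∈ F₀, (u * v * u⁻¹) σ = 1 :=
            fun σ hσ => by simp [Pi.mul_apply, Pi.inv_apply, huF σ hσ, hvF σ hσ]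
          have eρ : ((fun _ : T => u ρ) * v * (fun _ : T => u ρ)⁻¹) ρ = (u * v * u⁻¹) ρ := by
            simp [Pi.mul_apply, Pi.inv_apply]
          have eτ := same _ m1 _ m2 e1 e2 eρ
          simp only [Pi.mul_apply, Pi.inv_apply] at eτ
          rw [hvτ] at eτ
          have h := congrArg (fun t => (u τ)⁻¹ * t * u ρ) eτ
          simpa [mul_assoc] using h
        have := center_trivial hnc hcomm
        exact (inv_mul_eq_one.mp this).symm
      -- final contradiction using an f with f ρ ≠ f τ
      obtain ⟨f, hf, hfne⟩ := hne τ (Finset.mem_insert_self τ F₀)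
      apply hfne
      have hcomm : ∀ x : G, ((f τ)⁻¹ * f ρ) * x = x * ((f τ)⁻¹ * f ρ) := by
        intro x
        obtain ⟨v, hv, hvF, hvρ⟩ := mem_projSub.mp (hK₁ x)
        have m2 : (f * v * f⁻¹) ∈ H := H.mul_mem (H.mul_mem hf hv) (H.inv_mem hf)
        have e2 : ∀ σ ∈ F₀, (f * v * f⁻¹) σ = 1 :=
          fun σ hσ => by simp [Pi.mul_apply, Pi.inv_apply, hvF σ hσ]
        have hd := diag _ m2 e2
        have hvd := diag v hv hvF
        simp only [Pi.mul_apply, Pi.inv_apply] at hd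
        rw [← hvd, hvρ] at hd
        have h := congrArg (fun t => (f τ)⁻¹ * t * f ρ) hd
        simpa [mul_assoc] using h
      exact ((inv_mul_eq_one.mp (center_trivial hnc hcomm)).symm)

/-- Joint surjectivity: on any finite set of pairwise inequivalent supported coordinates,
`H` projects onto everything. -/
lemma surj_lemma [IsSimpleGroup G] (hnc : ∃ a b : G, a * b ≠ b * a)
    (H : Subgroup (T → G))
    (hH : ∀ g : G, ∀ h ∈ H, (fun _ : T => g) * h * (fun _ : T => g)⁻¹ ∈ H)
    (F : Finset T)
    (hS : ∀ ρ ∈ F, ∃ f ∈ H, f ρ ≠ 1)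
    (hpair : ∀ ρ ∈ F, ∀ τ ∈ F, ρ ≠ τ → ∃ f ∈ H, f ρ ≠ f τ)
    (gt : T → G) : ∃ h ∈ H, ∀ ρ ∈ F, h ρ = gt ρ := by
  classical
  induction F using Finset.induction_on with
  | empty => exact ⟨1, H.one_mem, by simp⟩
  | @insert ρ F₀ hρF₀ IH =>
      obtain ⟨u, hu, huF⟩ := IH (fun σ hσ => hS σ (Finset.mem_insert_of_mem hσ))
        (fun σ hσ τ hτ hne => hpair σ (Finset.mem_insert_of_mem hσ) τ
          (Finset.mem_insert_of_mem hτ) hne)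
      obtain ⟨v₀, hv₀, hv₀F, hv₀ρ⟩ := core_lemma hnc H hH F₀ ρ
        (hS ρ (Finset.mem_insert_self ρ F₀))
        (fun τ hτ => hpair ρ (Finset.mem_insert_self ρ F₀) τ (Finset.mem_insert_of_mem hτ)
          (fun h => hρF₀ (h ▸ hτ)))
      have htop : ∀ x : G, x ∈ projSub H (↑F₀) ρ :=
        fun x => normal_all (projSub_normal H hH _ _)
          (mem_projSub.mpr ⟨v₀, hv₀, fun σ hσ => hv₀F σ (by exact_mod_cast hσ), rfl⟩) hv₀ρ x
      obtain ⟨v, hv, hvF, hvρ⟩ := mem_projSub.mp (htop (gt ρ * (u ρ)⁻¹))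
      refine ⟨v * u, H.mul_mem hv hu, ?_⟩
      intro σ hσ
      rcases Finset.mem_insert.mp hσ with rfl | hσ
      · simp [Pi.mul_apply, hvρ]
      · simp [Pi.mul_apply, hvF σ (by exact_mod_cast hσ), huF σ hσ]
end Aux


/-- Let `G` be a simple non-commutative group and `T` a finite index set. A subgroup `H` of
`∏_{σ ∈ T} G` is normalized by the diagonal subgroup `Δ(G)` if and only if `H` is a product of
diagonals: there exist pairwise disjoint nonempty subsets `T₁, …, T_r` of `T` such that `H`
consists exactly of the tuples that are constant on each `Tᵢ` and equal to `1` outside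
`T₁ ∪ ⋯ ∪ T_r`. -/
theorem normalized_by_diagonal_iff_product_of_diagonals
    {G : Type*} [Group G] [IsSimpleGroup G] (hnc : ∃ a b : G, a * b ≠ b * a)
    {T : Type*} [Fintype T] (H : Subgroup (T → G)) :
    (∀ g : G, ∀ h ∈ H, (fun _ : T => g) * h * (fun _ : T => g)⁻¹ ∈ H) ↔
      ∃ (r : ℕ) (Ti : Fin r → Set T),
        (∀ i, (Ti i).Nonempty) ∧
        (Pairwise fun i j => Disjoint (Ti i) (Ti j)) ∧
        (∀ f : T → G, f ∈ H ↔
          ((∀ i, ∀ σ ∈ Ti i, ∀ τ ∈ Ti i, f σ = f τ) ∧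
            (∀ σ : T, (∀ i, σ ∉ Ti i) → f σ = 1))) := by
  classical
  constructor
  · intro hH
    haveI : Fintype (Set T) := Fintype.ofFinite _
    set InS : T → Prop := fun σ => ∃ f ∈ H, f σ ≠ 1 with hInS
    set R : T → T → Prop := fun σ τ => ∀ f ∈ H, f σ = f τ with hR
    have Rrefl : ∀ σ, R σ σ := fun σ f _ => rfl
    have class_eq : ∀ σ σ' : T, R σ σ' → {τ | R σ τ} = {τ | R σ' τ} := by
      intro σ σ' hσσ'
      ext τ
      simp only [Set.mem_setOf_eq, hR]
      constructor
      · intro h f hf; rw [← hσσ' f hf]; exact h f hf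
      · intro h f hf; rw [hσσ' f hf]; exact h f hf
    set CS : Finset (Set T) :=
      Finset.univ.filter (fun C : Set T => ∃ σ, InS σ ∧ C = {τ | R σ τ}) with hCS
    have hmemCS : ∀ i : Fin CS.card,
        ∃ σ, InS σ ∧ ((CS.equivFin.symm i : Set T) = {τ | R σ τ}) := by
      intro i
      have := (CS.equivFin.symm i).2
      exact (Finset.mem_filter.mp this).2
    have hCSmem : ∀ σ, InS σ → {τ | R σ τ} ∈ CS := by
      intro σ hσ
      exact Finset.mem_filter.mpr ⟨Finset.mem_univ _, σ, hσ, rfl⟩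
    have key_out : ∀ σ, (∀ i : Fin CS.card, σ ∉ (CS.equivFin.symm i : Set T)) → ¬ InS σ := by
      intro σ hσ hIn
      have hmem := hCSmem σ hIn
      have := hσ (CS.equivFin ⟨_, hmem⟩)
      rw [Equiv.symm_apply_apply] at this
      exact this (Rrefl σ)
    refine ⟨CS.card, fun i => (CS.equivFin.symm i : Set T), ?_, ?_, ?_⟩
    · intro i
      obtain ⟨σ, hσ, hC⟩ := hmemCS i
      exact ⟨σ, by show σ ∈ (CS.equivFin.symm i : Set T); rw [hC]; exact Rrefl σ⟩
    · intro i j hij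
      show Disjoint ((CS.equivFin.symm i : Set T)) ((CS.equivFin.symm j : Set T))
      rw [Set.disjoint_left]
      intro τ hτi hτj
      obtain ⟨σi, hσi, hCi⟩ := hmemCS i
      obtain ⟨σj, hσj, hCj⟩ := hmemCS j
      rw [hCi] at hτi; rw [hCj] at hτj
      have hcc : {τ' | R σi τ'} = {τ' | R σj τ'} := by
        rw [class_eq σi τ hτi, class_eq σj τ hτj]
      have : (CS.equivFin.symm i : Set T) = (CS.equivFin.symm j : Set T) := by
        rw [hCi, hCj, hcc]
      exact hij (CS.equivFin.symm.injective (Subtype.ext this))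
    · intro f
      constructor
      · intro hf
        constructor
        · intro i σ hσ τ hτ
          obtain ⟨σ₀, hσ₀, hC⟩ := hmemCS i
          replace hσ : σ ∈ (CS.equivFin.symm i : Set T) := hσ
          replace hτ : τ ∈ (CS.equivFin.symm i : Set T) := hτ
          rw [hC] at hσ hτ
          exact (hσ f hf).symm.trans (hτ f hf)
        · intro σ hσ
          by_contra h1
          exact key_out σ hσ ⟨f, hf, h1⟩
      · rintro ⟨hconst, hout⟩
        set pick : Fin CS.card → T := fun i => Classical.choose (hmemCS i) with hpick
        have pickspec : ∀ i, InS (pick i) ∧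
            ((CS.equivFin.symm i : Set T) = {τ | R (pick i) τ}) :=
          fun i => Classical.choose_spec (hmemCS i)
        set F : Finset T := Finset.image pick Finset.univ with hF
        have hS : ∀ ρ ∈ F, ∃ f ∈ H, f ρ ≠ 1 := by
          intro ρ hρ
          obtain ⟨i, _, rfl⟩ := Finset.mem_image.mp hρ
          exact (pickspec i).1
        have hpairF : ∀ ρ ∈ F, ∀ τ ∈ F, ρ ≠ τ → ∃ f' ∈ H, f' ρ ≠ f' τ := by
          intro ρ hρ τ hτ hne
          obtain ⟨i, _, rfl⟩ := Finset.mem_image.mp hρ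
          obtain ⟨j, _, rfl⟩ := Finset.mem_image.mp hτ
          by_contra hcon
          push_neg at hcon
          have hRij : R (pick i) (pick j) := fun f' hf' => hcon f' hf'
          have : (CS.equivFin.symm i : Set T) = (CS.equivFin.symm j : Set T) := by
            rw [(pickspec i).2, (pickspec j).2, class_eq _ _ hRij]
          have := CS.equivFin.symm.injective (Subtype.ext this)
          subst this
          exact hne rfl
        obtain ⟨h, hh, hmatch⟩ := surj_lemma hnc H hH F hS hpairF f
        have : f = h := by
          funext σ
          by_cases hin : ∃ i, σ ∈ (CS.equivFin.symm i : Set T)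
          · obtain ⟨i, hσi⟩ := hin
            replace hσi : σ ∈ (CS.equivFin.symm i : Set T) := hσi
            have hC := (pickspec i).2
            have hpm : pick i ∈ (CS.equivFin.symm i : Set T) := by
              rw [hC]; exact Rrefl _
            have hfσ : f σ = f (pick i) := hconst i σ hσi (pick i) hpm
            have hRσ : R (pick i) σ := by rw [hC] at hσi; exact hσi
            have hhσ : h (pick i) = h σ := hRσ h hh
            have hmat : h (pick i) = f (pick i) :=
              hmatch (pick i) (Finset.mem_image.mpr ⟨i, Finset.mem_univ i, rfl⟩)
            rw [hfσ, ← hmat, hhσ]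
          · push_neg at hin
            have h1 : f σ = 1 := hout σ hin
            have h2 : h σ = 1 := by
              by_contra h2
              exact key_out σ hin ⟨h, hh, h2⟩
            rw [h1, h2]
        rw [this]; exact hh
  · rintro ⟨r, Ti, _, _, hchar⟩ g h hh
    obtain ⟨hc, ho⟩ := (hchar h).mp hh
    refine (hchar _).mpr ⟨?_, ?_⟩
    · intro i σ hσ τ hτ
      simp only [Pi.mul_apply, Pi.inv_apply]
      rw [hc i σ hσ τ hτ]
    · intro σ hσ
      simp only [Pi.mul_apply, Pi.inv_apply, ho σ hσ]
      group
end

section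
/- Let G be a topological group, and let Γ₁, Γ₂ be closed subgroups of G such that the coset space G ⧸ (Γ₁ ∩ Γ₂) is compact. Then the subset (Γ₁ × Γ₂)·Δ(G) = {(γ₁ g, γ₂ g) : γ₁ ∈ Γ₁, γ₂ ∈ Γ₂, g ∈ G} is closed in G × G. -/
/-!
The set is the preimage, under the continuous map `(a, b) ↦ (a⁻¹Γ₁, b⁻¹Γ₂)`, of the image of
`G` in `G ⧸ Γ₁ × G ⧸ Γ₂` under `g ↦ (gΓ₁, gΓ₂)`. That image is also the image of the compact
space `G ⧸ (Γ₁ ⊓ Γ₂)`, hence compact, and so closed because coset spaces by closed subgroups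
are Hausdorff.
-/

open QuotientGroup

namespace QuotientGroup

variable {G : Type*} [Group G]

theorem isCompact_range_mk_prod_mk [TopologicalSpace G] (H K : Subgroup G)
    [CompactSpace (G ⧸ (H ⊓ K))] :
    IsCompact (Set.range fun g : G ↦ ((g : G ⧸ H), (g : G ⧸ K))) := by
  let φ : G ⧸ (H ⊓ K) → (G ⧸ H) × (G ⧸ K) :=
    Quotient.lift (fun g ↦ ((g : G ⧸ H), (g : G ⧸ K))) fun _ _ hab ↦
      Prod.ext (QuotientGroup.eq.mpr (leftRel_apply.mp hab).1)
        (QuotientGroup.eq.mpr (leftRel_apply.mp hab).2)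
  have hφ : Continuous φ := (continuous_mk.prodMk continuous_mk).quotient_lift _
  exact mk_surjective.range_comp φ ▸ isCompact_range hφ

theorem setOf_prod_mul_diagonal_eq_preimage (H K : Subgroup G) :
    {x : G × G | ∃ γ₁ ∈ H, ∃ γ₂ ∈ K, ∃ g : G, x = (γ₁ * g, γ₂ * g)} =
      (fun x : G × G ↦ (((x.1⁻¹ : G) : G ⧸ H), ((x.2⁻¹ : G) : G ⧸ K))) ⁻¹'
        Set.range fun g : G ↦ ((g : G ⧸ H), (g : G ⧸ K)) := by
  ext ⟨a, b⟩
  simp only [Set.mem_ofPred_eq, Set.mem_preimage, Set.mem_range, Prod.mk.injEq, QuotientGroup.eq,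
    ← mul_inv_rev, inv_mem_iff]
  constructor
  · rintro ⟨γ₁, hγ₁, γ₂, hγ₂, g, rfl, rfl⟩
    exact ⟨g⁻¹, by simpa using hγ₁, by simpa using hγ₂⟩
  · rintro ⟨g, ha, hb⟩
    exact ⟨_, ha, _, hb, g⁻¹, by group, by group⟩

end QuotientGroup

/-- Let `G` be a topological group and `Γ₁, Γ₂` closed subgroups such that
`G ⧸ (Γ₁ ⊓ Γ₂)` is compact. Then the set
`(Γ₁ × Γ₂)·Δ(G) = {(γ₁ g, γ₂ g) : γ₁ ∈ Γ₁, γ₂ ∈ Γ₂, g ∈ G}` is closed in `G × G`. -/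
theorem isClosed_prod_mul_diagonal_of_compact_quotient
    {G : Type*} [Group G] [TopologicalSpace G] [IsTopologicalGroup G]
    (Γ₁ Γ₂ : Subgroup G)
    (h₁ : IsClosed (Γ₁ : Set G)) (h₂ : IsClosed (Γ₂ : Set G))
    (hc : CompactSpace (G ⧸ (Γ₁ ⊓ Γ₂))) :
    IsClosed {x : G × G | ∃ γ₁ ∈ Γ₁, ∃ γ₂ ∈ Γ₂, ∃ g : G, x = (γ₁ * g, γ₂ * g)} := by
  have : T2Space (G ⧸ Γ₁) := instT2Space
  have : T2Space (G ⧸ Γ₂) := instT2Space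
  rw [setOf_prod_mul_diagonal_eq_preimage]
  exact (isCompact_range_mk_prod_mk Γ₁ Γ₂).isClosed.preimage <|
    (continuous_mk.comp continuous_fst.inv).prodMk (continuous_mk.comp continuous_snd.inv)
end

section
/- Let p be a prime number and let B be a finite-dimensional central simple algebra over ℚ, i.e., a finite-dimensional ℚ-algebra that is a simple ring whose center is ℚ·1. Set B_p = B ⊗_ℚ ℚ_p and let ι: B → B_p, b ↦ b ⊗ 1, be the canonical map. If a is a unit of B_p such that a · ι(b) · a^{-1} ∈ ι(B) for every b ∈ B, then there exist c ∈ ℚ_p^× and a unit u ∈ B^× such that a = c · ι(u). -/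
open TensorProduct

/-! Conjugation by `a` restricts to a map `φ : B → B`, so `a * ι b = ι (φ b) * a`. Writing `a` in a
`ℚ`-basis of `ℚ_p`, some nonzero coefficient `u ∈ B` satisfies `u * b = φ b * u`; then `B u` is a
nonzero two-sided ideal, so `u` has a left inverse, hence is a unit as `B` is Artinian. Now
`ι u⁻¹ * a` centralizes `ι B`, and as `B` is central that centralizer is `1 ⊗ ℚ_p`. -/

section Coefficients

variable {R A C : Type*} [CommRing R] [Ring A] [Algebra R A] [Ring C] [Algebra R C]

lemma TensorProduct.rid_lTensor_tmul_one_mul (ℓ : C →ₗ[R] R) (b : A) (x : A ⊗[R] C) :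
    TensorProduct.rid R A (ℓ.lTensor A ((b ⊗ₜ 1) * x)) =
      b * TensorProduct.rid R A (ℓ.lTensor A x) := by
  induction x using TensorProduct.induction_on with
  | zero => simp
  | tmul y c => simp
  | add x₁ x₂ h₁ h₂ => simp only [mul_add, map_add, h₁, h₂]

lemma TensorProduct.rid_lTensor_mul_tmul_one (ℓ : C →ₗ[R] R) (b : A) (x : A ⊗[R] C) :
    TensorProduct.rid R A (ℓ.lTensor A (x * (b ⊗ₜ 1))) =
      TensorProduct.rid R A (ℓ.lTensor A x) * b := by
  induction x using TensorProduct.induction_on with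
  | zero => simp
  | tmul y c => simp
  | add x₁ x₂ h₁ h₂ => simp only [add_mul, map_add, h₁, h₂]

lemma TensorProduct.exists_ne_zero_mul_eq_mul_of_mul_tmul_one [Module.Free R C]
    {x : A ⊗[R] C} (hx : x ≠ 0) (f : A → A) (hf : ∀ b, x * (b ⊗ₜ 1) = (f b ⊗ₜ 1) * x) :
    ∃ u : A, u ≠ 0 ∧ ∀ b, u * b = f b * u := by
  classical
  let 𝒞 := Module.Free.chooseBasis R C
  obtain ⟨i, hi⟩ : ∃ i, equivFinsuppOfBasisRight 𝒞 x i ≠ 0 := by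
    simpa using Finsupp.ne_iff.mp ((equivFinsuppOfBasisRight 𝒞).map_ne_zero_iff.mpr hx)
  rw [equivFinsuppOfBasisRight_apply] at hi
  refine ⟨_, hi, fun b => ?_⟩
  rw [← rid_lTensor_mul_tmul_one, hf, rid_lTensor_tmul_one_mul]

open Algebra.TensorProduct in
lemma Subalgebra.centralizer_range_includeLeft_eq_range_includeRight
    [Algebra.IsCentral R A] [Module.Free R C] :
    Subalgebra.centralizer R (includeLeft : A →ₐ[R] A ⊗[R] C).range =
      (includeRight : C →ₐ[R] A ⊗[R] C).range := by
  rw [Subalgebra.centralizer_coe_range_includeLeft_eq_center_tensorProduct]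
  apply le_antisymm
  · rintro _ ⟨y, rfl⟩
    induction y using TensorProduct.induction_on with
    | zero => simp
    | tmul c k =>
      obtain ⟨q, hq⟩ := (Algebra.IsCentral.mem_center_iff R).1 c.2
      refine ⟨q • k, ?_⟩
      simp [hq, Algebra.algebraMap_eq_smul_one, TensorProduct.smul_tmul]
    | add y₁ y₂ h₁ h₂ => rw [map_add]; exact add_mem h₁ h₂
  · rintro _ ⟨k, rfl⟩
    exact ⟨1 ⊗ₜ k, by simp⟩

end Coefficients

lemma IsSimpleRing.isUnit_of_mul_eq_mul {A : Type*} [Ring A] [IsSimpleRing A]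
    [IsDedekindFiniteMonoid A] {u : A} (hu : u ≠ 0) (f : A → A) (hf : ∀ b, u * b = f b * u) :
    IsUnit u := by
  let J : TwoSidedIdeal A := .mk' (Set.range (· * u)) ⟨0, zero_mul u⟩
    (by rintro _ _ ⟨y₁, rfl⟩ ⟨y₂, rfl⟩; exact ⟨y₁ + y₂, add_mul _ _ _⟩)
    (by rintro _ ⟨y, rfl⟩; exact ⟨-y, neg_mul _ _⟩)
    (by rintro x _ ⟨y, rfl⟩; exact ⟨x * y, mul_assoc _ _ _⟩)
    (by rintro _ x ⟨y, rfl⟩; exact ⟨y * f x, by simp only [mul_assoc, hf]⟩)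
  obtain ⟨v, hv⟩ : (1 : A) ∈ Set.range (· * u) :=
    (TwoSidedIdeal.mem_mk' ..).1 <|
      one_mem_of_ne_zero_mem J hu ((TwoSidedIdeal.mem_mk' ..).2 ⟨1, one_mul u⟩)
  exact .of_mul_eq_one v (mul_eq_one_symm hv)

/-- Let `p` be a prime and `B` a finite-dimensional central simple algebra over `ℚ`. Set
`B_p = B ⊗[ℚ] ℚ_p` with canonical map `ι : B → B_p`. If a unit `a` of `B_p` satisfies
`a · ι(b) · a⁻¹ ∈ ι(B)` for all `b ∈ B`, then `a = c · ι(u)` for some `c ∈ ℚ_p^×` and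
`u ∈ B^×`. -/
theorem unit_normalizing_rational_points_is_scalar_multiple
    (p : ℕ) [Fact p.Prime]
    {B : Type*} [Ring B] [Algebra ℚ B] [FiniteDimensional ℚ B]
    [Algebra.IsCentral ℚ B] [IsSimpleRing B]
    (ι : B →ₐ[ℚ] B ⊗[ℚ] ℚ_[p])
    (hι : ι = Algebra.TensorProduct.includeLeft)
    (a : (B ⊗[ℚ] ℚ_[p])ˣ)
    (ha : ∀ b : B, ∃ b' : B,
      (a : B ⊗[ℚ] ℚ_[p]) * ι b * ((↑a⁻¹ : B ⊗[ℚ] ℚ_[p])) = ι b') :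
    ∃ (c : ℚ_[p]ˣ) (u : Bˣ),
      (a : B ⊗[ℚ] ℚ_[p]) =
        (Algebra.TensorProduct.includeRight (c : ℚ_[p]) : B ⊗[ℚ] ℚ_[p]) * ι (u : B) := by
  choose φ hφ using ha
  have hφ' (b : B) : a * ι b = ι (φ b) * a := (Units.mul_inv_eq_iff_eq_mul a).1 (hφ b)
  have : IsArtinianRing B := .of_finite ℚ B
  obtain ⟨u, hu0, hu⟩ :=
    exists_ne_zero_mul_eq_mul_of_mul_tmul_one a.ne_zero φ (by simpa [hι] using hφ')
  obtain ⟨u, rfl⟩ := IsSimpleRing.isUnit_of_mul_eq_mul hu0 φ hu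
  set z := ι ↑u⁻¹ * (a : B ⊗[ℚ] ℚ_[p])
  have hz : z ∈ Subalgebra.centralizer ℚ ι.range := by
    rintro _ ⟨b, rfl⟩
    have hφb : φ b = u * b * ↑u⁻¹ := (Units.eq_mul_inv_iff_mul_eq u).2 (hu b).symm
    have hconj : ↑u⁻¹ * φ b = b * ↑u⁻¹ := by simp [hφb, mul_assoc]
    calc ι b * z = ι (↑u⁻¹ * φ b) * a := by rw [hconj, map_mul, mul_assoc]
      _ = z * ι b := by rw [map_mul, mul_assoc, mul_assoc, hφ']
  have ha_eq : (a : B ⊗[ℚ] ℚ_[p]) = z * ι u := by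
    rw [← (Subalgebra.mem_centralizer_iff ℚ).1 hz _ (ι.mem_range_self u), ← mul_assoc,
      ← map_mul, Units.mul_inv, map_one, one_mul]
  obtain ⟨c, hc⟩ := (AlgHom.mem_range _).1 <| by
    rwa [hι, Subalgebra.centralizer_range_includeLeft_eq_range_includeRight (C := ℚ_[p])] at hz
  have hc0 : c ≠ 0 := by
    rintro rfl
    exact a.ne_zero (by rw [ha_eq, ← hc, map_zero, zero_mul])
  exact ⟨Units.mk0 c hc0, u, by rw [ha_eq, ← hc, Units.val_mk0]⟩
end

section
/- Let p be a prime, N ≥ 1 an integer, and regard ℚ as a subfield of ℚ_p. Let G₁ and G₂ be subgroups of GL_N(ℚ_p) satisfying: (i) every element of G₁ and every element of G₂ has trace lying in ℚ; (ii) for every c ∈ ℚ^×, the scalar matrix c·1_N belongs to both G₁ and G₂; (iii) for every g ∈ G₁ there exists g' ∈ G₁ with tr(g') ≠ 0 and tr(g·g') ≠ 0, and likewise for every g ∈ G₂ there exists such g' ∈ G₂; (iv) for every g₁ ∈ G₁ there exist b ∈ ℚ_p^× and g₂ ∈ G₂ with g₁ = b·g₂, and for every g₂ ∈ G₂ there exist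 b ∈ ℚ_p^× and g₁ ∈ G₁ with g₂ = b·g₁. Then G₁ = G₂. -/
/-!
Write `g₁ = b • g₂` with `g₂ ∈ G₂`; it suffices to show that `b` is rational, for then
`g₁ g₂⁻¹ = b • 1` is a rational scalar and hence lies in `G₂`. Choose `g₂' ∈ G₂` with
`tr g₂' ≠ 0`, `tr (g₂ g₂') ≠ 0`, and write `g₂' = b' • h` with `h ∈ G₁`. Then `b' = tr g₂' / tr h`
is rational, hence so is `tr (g₁ g₂') = b' tr (g₁ h)`, and finally `b = tr (g₁ g₂') / tr (g₂ g₂')`.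
-/

namespace Matrix

variable {n K : Type*} [Fintype n] [Field K] {S : Subfield K}

theorem mem_of_eq_smul_of_trace_mem {A B : Matrix n n K} {b : K} (h : A = b • B)
    (hA : A.trace ∈ S) (hB : B.trace ∈ S) (hB0 : B.trace ≠ 0) : b ∈ S := by
  have hb : b = A.trace / B.trace := by
    rw [h, trace_smul, smul_eq_mul, mul_div_cancel_right₀ _ hB0]
  exact hb ▸ div_mem hA hB

theorem mem_of_eq_smul_of_trace_mul_mem {g₁ g₂ g₂' h : Matrix n n K} {b b' : K}
    (hg₁ : g₁ = b • g₂) (hg₂' : g₂' = b' • h) (hg₂'S : g₂'.trace ∈ S) (hhS : h.trace ∈ S)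
    (hg₁hS : (g₁ * h).trace ∈ S) (hg₂g₂'S : (g₂ * g₂').trace ∈ S)
    (hg₂'0 : g₂'.trace ≠ 0) (hg₂g₂'0 : (g₂ * g₂').trace ≠ 0) : b ∈ S := by
  have hh0 : h.trace ≠ 0 := fun h0 ↦ hg₂'0 (by rw [hg₂', trace_smul, h0, smul_zero])
  have hb' : b' ∈ S := mem_of_eq_smul_of_trace_mem hg₂' hg₂'S hhS hh0
  have hg₁g₂'S : (g₁ * g₂').trace ∈ S := by
    rw [hg₂', Matrix.mul_smul, trace_smul, smul_eq_mul]
    exact mul_mem hb' hg₁hS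
  exact mem_of_eq_smul_of_trace_mem (by rw [hg₁, smul_mul]) hg₁g₂'S hg₂g₂'S hg₂g₂'0

end Matrix

theorem Subgroup.le_of_trace_mem_of_eq_smul {n K : Type*} [Fintype n] [DecidableEq n] [Field K]
    (S : Subfield K) (G₁ G₂ : Subgroup (GL n K))
    (htr₁ : ∀ g ∈ G₁, (g : Matrix n n K).trace ∈ S)
    (htr₂ : ∀ g ∈ G₂, (g : Matrix n n K).trace ∈ S)
    (hscal : ∀ c ∈ S, c ≠ 0 → ∀ g : GL n K, (g : Matrix n n K) = c • 1 → g ∈ G₂)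
    (hnz₂ : ∀ g ∈ G₂, ∃ g' ∈ G₂,
      (g' : Matrix n n K).trace ≠ 0 ∧ ((g * g' : GL n K) : Matrix n n K).trace ≠ 0)
    (h₁₂ : ∀ g₁ ∈ G₁, ∃ b : K, b ≠ 0 ∧ ∃ g₂ ∈ G₂, (g₁ : Matrix n n K) = b • (g₂ : Matrix n n K))
    (h₂₁ : ∀ g₂ ∈ G₂, ∃ b : K, ∃ g₁ ∈ G₁, (g₂ : Matrix n n K) = b • (g₁ : Matrix n n K)) :
    G₁ ≤ G₂ := by
  intro g₁ hg₁
  obtain ⟨b, hb0, g₂, hg₂, hg₁₂⟩ := h₁₂ g₁ hg₁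
  obtain ⟨g₂', hg₂', hg₂'0, hg₂g₂'0⟩ := hnz₂ g₂ hg₂
  obtain ⟨b', h, hh, hg₂'h⟩ := h₂₁ g₂' hg₂'
  have hbS : b ∈ S := Matrix.mem_of_eq_smul_of_trace_mul_mem hg₁₂ hg₂'h (htr₂ _ hg₂') (htr₁ _ hh)
    (htr₁ _ (mul_mem hg₁ hh)) (htr₂ _ (mul_mem hg₂ hg₂')) hg₂'0 hg₂g₂'0
  have hscalar : g₁ * g₂⁻¹ ∈ G₂ :=
    hscal b hbS hb0 _ (by rw [Units.val_mul, hg₁₂, Matrix.smul_mul, Units.mul_inv])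
  simpa using mul_mem hscalar hg₂

theorem subgroups_eq_of_rational_traces_and_scalar_equivalence_general
    (p : ℕ) [Fact p.Prime] (N : ℕ)
    (G₁ G₂ : Subgroup (GL (Fin N) ℚ_[p]))
    (htr₁ : ∀ g ∈ G₁, ∃ q : ℚ,
      Matrix.trace (g : Matrix (Fin N) (Fin N) ℚ_[p]) = (q : ℚ_[p]))
    (htr₂ : ∀ g ∈ G₂, ∃ q : ℚ,
      Matrix.trace (g : Matrix (Fin N) (Fin N) ℚ_[p]) = (q : ℚ_[p]))
    (hscal : ∀ c : ℚ, c ≠ 0 → ∀ g : GL (Fin N) ℚ_[p],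
      (g : Matrix (Fin N) (Fin N) ℚ_[p]) = (c : ℚ_[p]) • (1 : Matrix (Fin N) (Fin N) ℚ_[p]) →
      g ∈ G₁ ∧ g ∈ G₂)
    (hnz₁ : ∀ g ∈ G₁, ∃ g' ∈ G₁,
      Matrix.trace ((g' : Matrix (Fin N) (Fin N) ℚ_[p])) ≠ 0 ∧
      Matrix.trace ((g * g' : GL (Fin N) ℚ_[p]) : Matrix (Fin N) (Fin N) ℚ_[p]) ≠ 0)
    (hnz₂ : ∀ g ∈ G₂, ∃ g' ∈ G₂,
      Matrix.trace ((g' : Matrix (Fin N) (Fin N) ℚ_[p])) ≠ 0 ∧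
      Matrix.trace ((g * g' : GL (Fin N) ℚ_[p]) : Matrix (Fin N) (Fin N) ℚ_[p]) ≠ 0)
    (h₁₂ : ∀ g₁ ∈ G₁, ∃ b : ℚ_[p], b ≠ 0 ∧ ∃ g₂ ∈ G₂,
      (g₁ : Matrix (Fin N) (Fin N) ℚ_[p]) = b • (g₂ : Matrix (Fin N) (Fin N) ℚ_[p]))
    (h₂₁ : ∀ g₂ ∈ G₂, ∃ b : ℚ_[p], b ≠ 0 ∧ ∃ g₁ ∈ G₁,
      (g₂ : Matrix (Fin N) (Fin N) ℚ_[p]) = b • (g₁ : Matrix (Fin N) (Fin N) ℚ_[p])) :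
    G₁ = G₂ := by
  set S := (algebraMap ℚ ℚ_[p]).fieldRange
  have htr : ∀ G : Subgroup (GL (Fin N) ℚ_[p]), (∀ g ∈ G, ∃ q : ℚ,
      Matrix.trace (g : Matrix (Fin N) (Fin N) ℚ_[p]) = (q : ℚ_[p])) →
      ∀ g ∈ G, (g : Matrix (Fin N) (Fin N) ℚ_[p]).trace ∈ S := fun G hG g hg ↦
    let ⟨q, hq⟩ := hG g hg; ⟨q, hq.symm⟩
  have hscalS : ∀ c ∈ S, c ≠ 0 → ∀ g : GL (Fin N) ℚ_[p],
      (g : Matrix (Fin N) (Fin N) ℚ_[p]) = c • 1 → g ∈ G₁ ∧ g ∈ G₂ := by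
    rintro _ ⟨q, rfl⟩ hq
    exact hscal q (by simpa using hq)
  refine le_antisymm ?_ ?_
  · exact Subgroup.le_of_trace_mem_of_eq_smul S G₁ G₂ (htr G₁ htr₁) (htr G₂ htr₂)
      (fun c hc hc0 g hg ↦ (hscalS c hc hc0 g hg).2) hnz₂ h₁₂
      fun g hg ↦ (h₂₁ g hg).imp fun _ ↦ And.right
  · exact Subgroup.le_of_trace_mem_of_eq_smul S G₂ G₁ (htr G₂ htr₂) (htr G₁ htr₁)
      (fun c hc hc0 g hg ↦ (hscalS c hc hc0 g hg).1) hnz₁ h₂₁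
      fun g hg ↦ (h₁₂ g hg).imp fun _ ↦ And.right

/-- Let `p` be a prime, `N ≥ 1`, and `G₁, G₂` subgroups of `GL_N(ℚ_p)` such that:
(i) all traces of elements of `G₁`, `G₂` are rational;
(ii) all nonzero rational scalar matrices lie in `G₁` and `G₂`;
(iii) for every `g ∈ Gᵢ` there is `g' ∈ Gᵢ` with `tr(g') ≠ 0` and `tr(g g') ≠ 0`;
(iv) every element of `G₁` is a `ℚ_p^×`-scalar multiple of an element of `G₂` and conversely.
Then `G₁ = G₂`. -/
theorem subgroups_eq_of_rational_traces_and_scalar_equivalence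
    (p : ℕ) [Fact p.Prime] (N : ℕ) (hN : 1 ≤ N)
    (G₁ G₂ : Subgroup (GL (Fin N) ℚ_[p]))
    (htr₁ : ∀ g ∈ G₁, ∃ q : ℚ,
      Matrix.trace (g : Matrix (Fin N) (Fin N) ℚ_[p]) = (q : ℚ_[p]))
    (htr₂ : ∀ g ∈ G₂, ∃ q : ℚ,
      Matrix.trace (g : Matrix (Fin N) (Fin N) ℚ_[p]) = (q : ℚ_[p]))
    (hscal : ∀ c : ℚ, c ≠ 0 → ∀ g : GL (Fin N) ℚ_[p],
      (g : Matrix (Fin N) (Fin N) ℚ_[p]) = (c : ℚ_[p]) • (1 : Matrix (Fin N) (Fin N) ℚ_[p]) →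
      g ∈ G₁ ∧ g ∈ G₂)
    (hnz₁ : ∀ g ∈ G₁, ∃ g' ∈ G₁,
      Matrix.trace ((g' : Matrix (Fin N) (Fin N) ℚ_[p])) ≠ 0 ∧
      Matrix.trace ((g * g' : GL (Fin N) ℚ_[p]) : Matrix (Fin N) (Fin N) ℚ_[p]) ≠ 0)
    (hnz₂ : ∀ g ∈ G₂, ∃ g' ∈ G₂,
      Matrix.trace ((g' : Matrix (Fin N) (Fin N) ℚ_[p])) ≠ 0 ∧
      Matrix.trace ((g * g' : GL (Fin N) ℚ_[p]) : Matrix (Fin N) (Fin N) ℚ_[p]) ≠ 0)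
    (h₁₂ : ∀ g₁ ∈ G₁, ∃ b : ℚ_[p], b ≠ 0 ∧ ∃ g₂ ∈ G₂,
      (g₁ : Matrix (Fin N) (Fin N) ℚ_[p]) = b • (g₂ : Matrix (Fin N) (Fin N) ℚ_[p]))
    (h₂₁ : ∀ g₂ ∈ G₂, ∃ b : ℚ_[p], b ≠ 0 ∧ ∃ g₁ ∈ G₁,
      (g₂ : Matrix (Fin N) (Fin N) ℚ_[p]) = b • (g₁ : Matrix (Fin N) (Fin N) ℚ_[p])) :
    G₁ = G₂ :=
  subgroups_eq_of_rational_traces_and_scalar_equivalence_general p N G₁ G₂ htr₁ htr₂ hscal hnz₁ hnz₂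
    h₁₂ h₂₁
end
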